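/- Let f : ℝ → ℝ be given by f(x) = x² − x − 3. For every θ ∈ [−2, 3] and every integer i ≥ 0, the set f^{−i}(θ) = {x ∈ ℝ : f^i(x) = θ} is contained in [−2,3] (for i ≥ 1) and consists of exactly 2^i real numbers. -/
import Mathlib

/-- The quadratic polynomial `f(x) = x² - x - 3`. -/
noncomputable def hanoiF (x : ℝ) : ℝ := x ^ 2 - x - 3

noncomputable def hanoiGm (y : ℝ) : ℝ := (1 - Real.sqrt (13 + 4*y)) / 2
noncomputable def hanoiGp (y : ℝ) : ℝ := (1 + Real.sqrt (13 + 4*y)) / 2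

lemma hanoi_key (y : ℝ) (hy : -2 ≤ y) (x : ℝ) :
    hanoiF x = y ↔ x = hanoiGm y ∨ x = hanoiGp y := by
  have h0 : (0:ℝ) ≤ 13 + 4*y := by linarith
  have hs : Real.sqrt (13+4*y) ^ 2 = 13 + 4*y := Real.sq_sqrt h0
  constructor
  · intro h
    have h2 : (x - hanoiGm y) * (x - hanoiGp y) = 0 := by
      unfold hanoiF at h; unfold hanoiGm hanoiGp; nlinarith [hs]
    rcases mul_eq_zero.1 h2 with h' | h'
    · left; linarith
    · right; linarith
  · rintro (h | h) <;> (subst h; simp only [hanoiF, hanoiGm, hanoiGp]; nlinarith [hs])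

lemma hanoi_sqrt_le (y : ℝ) (hy : y ≤ 3) : Real.sqrt (13 + 4*y) ≤ 5 := by
  have : Real.sqrt (13 + 4*y) ≤ Real.sqrt 25 := Real.sqrt_le_sqrt (by linarith)
  have h25 : Real.sqrt 25 = 5 := by
    rw [show (25:ℝ) = 5^2 by norm_num, Real.sqrt_sq (by norm_num : (0:ℝ) ≤ 5)]
  linarith [this, h25.le, h25.ge]

lemma hanoiGm_mem (y : ℝ) (hy : y ∈ Set.Icc (-2:ℝ) 3) : hanoiGm y ∈ Set.Icc (-2:ℝ) 3 := by
  have h1 := hanoi_sqrt_le y hy.2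
  have h2 := Real.sqrt_nonneg (13 + 4*y)
  unfold hanoiGm; constructor <;> [linarith; linarith]

lemma hanoiGp_mem (y : ℝ) (hy : y ∈ Set.Icc (-2:ℝ) 3) : hanoiGp y ∈ Set.Icc (-2:ℝ) 3 := by
  have h1 := hanoi_sqrt_le y hy.2
  have h2 := Real.sqrt_nonneg (13 + 4*y)
  unfold hanoiGp; constructor <;> [linarith; linarith]

lemma hanoiGm_ne (y : ℝ) (hy : -2 ≤ y) : hanoiGm y ≠ hanoiGp y := by
  have : 0 < Real.sqrt (13 + 4*y) := Real.sqrt_pos.2 (by linarith)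
  unfold hanoiGm hanoiGp; intro h
  linarith

lemma hanoi_aux (θ : ℝ) (hθ : θ ∈ Set.Icc (-2 : ℝ) 3) (i : ℕ) :
    ∃ s : Finset ℝ, {x : ℝ | hanoiF^[i] x = θ} = ↑s ∧
      ↑s ⊆ Set.Icc (-2:ℝ) 3 ∧ s.card = 2 ^ i := by
  induction i with
  | zero =>
    refine ⟨{θ}, ?_, ?_, by simp⟩
    · ext x; simp
    · simp [hθ]
  | succ n ih =>
    obtain ⟨s, hset, hsub, hcard⟩ := ih
    refine ⟨s.biUnion (fun y => {hanoiGm y, hanoiGp y}), ?_, ?_, ?_⟩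
    · ext x
      have : hanoiF^[n+1] x = θ ↔ hanoiF x ∈ {x : ℝ | hanoiF^[n] x = θ} := by
        rw [Function.iterate_succ_apply]; rfl
      simp only [Set.mem_setOf_eq, this, hset, Finset.coe_biUnion, Set.mem_iUnion,
        Finset.mem_coe, Finset.mem_biUnion, Finset.mem_insert, Finset.mem_singleton]
      constructor
      · intro hx
        exact ⟨hanoiF x, hx, (hanoi_key (hanoiF x) (hsub hx).1 x).1 rfl⟩
      · rintro ⟨y, hy, hxy⟩
        have : hanoiF x = y := (hanoi_key y (hsub hy).1 x).2 hxy
        rwa [this]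
    · intro x hx
      simp only [Finset.coe_biUnion, Set.mem_iUnion, Finset.mem_coe, Finset.mem_biUnion,
        Finset.mem_insert, Finset.mem_singleton] at hx
      obtain ⟨y, hy, hxy | hxy⟩ := hx
      · exact hxy ▸ hanoiGm_mem y (hsub hy)
      · exact hxy ▸ hanoiGp_mem y (hsub hy)
    · rw [Finset.card_biUnion]
      · have : ∀ y ∈ s, ({hanoiGm y, hanoiGp y} : Finset ℝ).card = 2 := fun y hy => by
          rw [Finset.card_insert_of_notMem (by simpa using hanoiGm_ne y (hsub hy).1)]
          simp
        rw [Finset.sum_congr rfl this, Finset.sum_const, hcard]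
        ring
      · intro y hy z hz hyz
        simp only [Finset.disjoint_left, Finset.mem_insert, Finset.mem_singleton]
        rintro a (ha | ha) (hb | hb) <;>
          exact hyz (((hanoi_key y (hsub hy).1 a).2 (by tauto)).symm.trans
            ((hanoi_key z (hsub hz).1 a).2 (by tauto)))

theorem hanoiF_preimage_card (θ : ℝ) (hθ : θ ∈ Set.Icc (-2 : ℝ) 3) (i : ℕ) :
    (1 ≤ i → {x : ℝ | hanoiF^[i] x = θ} ⊆ Set.Icc (-2 : ℝ) 3) ∧
    {x : ℝ | hanoiF^[i] x = θ}.ncard = 2 ^ i := by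
  obtain ⟨s, hset, hsub, hcard⟩ := hanoi_aux θ hθ i
  rw [hset]
  exact ⟨fun _ => hsub, by rw [Set.ncard_coe_finset, hcard]⟩
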